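/- arXiv:2005.13932 — 4 statements merged into one kernel-verified Lean document; each statement's English description precedes it below -/
import Mathlib

section
/- Let Q(x,y,z)=(y,z,x) on ℝ³ with standard inner product g. If v is a unit vector with 0 < angle between v and Qv < 2π/3, then {v, Qv, Q²v} is linearly independent (a basis of ℝ³). -/
def Qmap (v : Fin 3 → ℝ) : Fin 3 → ℝ := ![v 1, v 2, v 0]

def gdot (v w : Fin 3 → ℝ) : ℝ := v 0 * w 0 + v 1 * w 1 + v 2 * w 2

def fform (v w : Fin 3 → ℝ) : ℝ := gdot v (Qmap w) + gdot (Qmap v) w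

/-!
The rows `v, Qv, Q²v` form the circulant matrix of `(a, b, c) = v`, whose determinant factors as
`-(a + b + c)(a² + b² + c² - ab - bc - ca) = -(a + b + c)(g(v,v) - g(v,Qv))`.
For a unit vector with `g(v,Qv) = cos φ` the second factor is `1 - cos φ` and
`(a + b + c)² = 1 + 2 cos φ`, so the determinant vanishes only when `cos φ ∈ {1, -1/2}`,
which `0 < φ < 2π/3` excludes.
-/

theorem sq_coord_sum_eq_gdot_add_two_mul_gdot_Qmap (v : Fin 3 → ℝ) :
    (v 0 + v 1 + v 2) ^ 2 = gdot v v + 2 * gdot v (Qmap v) := by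
  simp only [gdot, Qmap, Matrix.cons_val]
  ring

theorem det_Qmap_orbit (v : Fin 3 → ℝ) :
    (Matrix.of ![v, Qmap v, Qmap (Qmap v)]).det
      = -(v 0 + v 1 + v 2) * (gdot v v - gdot v (Qmap v)) := by
  simp only [Matrix.det_fin_three, gdot, Qmap, Matrix.of_apply, Matrix.cons_val]
  ring

theorem linearIndependent_Qmap_orbit_iff (v : Fin 3 → ℝ) :
    LinearIndependent ℝ ![v, Qmap v, Qmap (Qmap v)]
      ↔ v 0 + v 1 + v 2 ≠ 0 ∧ gdot v (Qmap v) ≠ gdot v v := by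
  change LinearIndependent ℝ (Matrix.of ![v, Qmap v, Qmap (Qmap v)]).row ↔ _
  rw [Matrix.linearIndependent_rows_iff_isUnit, Matrix.isUnit_iff_isUnit_det, isUnit_iff_ne_zero,
    det_Qmap_orbit, mul_ne_zero_iff, neg_ne_zero, sub_ne_zero, ne_comm (a := gdot v v)]

open Real in
theorem neg_one_half_lt_cos_of_lt_two_pi_div_three {φ : ℝ} (h0 : 0 ≤ φ)
    (h1 : φ < 2 * π / 3) : -(1 / 2) < cos φ := by
  have hcos : cos (2 * π / 3) = -(1 / 2) := by
    rw [show 2 * π / 3 = π - π / 3 by ring, cos_pi_sub, cos_pi_div_three]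
  rw [← hcos]
  exact cos_lt_cos_of_nonneg_of_le_pi h0 (by linarith [pi_pos]) h1

open Real in
theorem cos_lt_one_of_pos_of_le_pi {φ : ℝ} (h0 : 0 < φ) (h1 : φ ≤ π) : cos φ < 1 := by
  simpa using cos_lt_cos_of_nonneg_of_le_pi le_rfl h1 h0

theorem stmt_4 (v : Fin 3 → ℝ) (hv : gdot v v = 1) (φ : ℝ)
    (hφ0 : 0 < φ) (hφ1 : φ < 2 * Real.pi / 3)
    (hcos : Real.cos φ = gdot v (Qmap v)) :
    LinearIndependent ℝ ![v, Qmap v, Qmap (Qmap v)] := by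
  have hlt : gdot v (Qmap v) < 1 :=
    hcos ▸ cos_lt_one_of_pos_of_le_pi hφ0 (by linarith [Real.pi_pos])
  have hgt : -(1 / 2) < gdot v (Qmap v) :=
    hcos ▸ neg_one_half_lt_cos_of_lt_two_pi_div_three hφ0.le hφ1
  rw [linearIndependent_Qmap_orbit_iff]
  refine ⟨fun hsum => ?_, by linarith⟩
  have hsq := sq_coord_sum_eq_gdot_add_two_mul_gdot_Qmap v
  rw [hsum, hv] at hsq
  linarith
end

section
/- Let F = (P, R, S) with P·R + R·S + S·P = 0, P + R ≠ 0, and let (x', y', z') satisfy x'y' + y'z' + x'z' = 0 with x' + y' ≠ 0. Then f(F, (x',y',z')) = (P·y' - R·x')² / ((P+R)(x'+y')), where f((a,b,c),(d,e,g)) = a(e+g) + b(d+g) + c(d+e). -/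
theorem stmt_11 (P R S x' y' z' : ℝ)
    (hF : P * R + R * S + S * P = 0) (hPR : P + R ≠ 0)
    (hc : x' * y' + y' * z' + x' * z' = 0) (hxy : x' + y' ≠ 0) :
    fform ![P, R, S] ![x', y', z'] =
      (P * y' - R * x') ^ 2 / ((P + R) * (x' + y')) := by
  have hS : S = -(P * R) / (P + R) := by
    field_simp
    linarith [hF]
  have hz : z' = -(x' * y') / (x' + y') := by
    field_simp
    linarith [hc]
  subst hS hz
  simp only [fform, gdot, Qmap, Matrix.cons_val_zero, Matrix.cons_val_one, Matrix.head_cons,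
    Matrix.cons_val_two, Matrix.tail_cons]
  field_simp
  ring
end

section
/- Let i be a unit vector in ℝ³ with ⟨i,Qi⟩ = cos φ, φ ∈ (0, 2π/3], Q the cyclic coordinate-permutation, and j = (1/sin φ)(-cos φ·i + Qi). Then ⟨i, Qj⟩ = (cos φ - cos²φ)/sin φ, ⟨j, Qi⟩ = sin φ, and ⟨j, Qj⟩ = -cos²φ/(1 + cos φ). -/
theorem stmt_13 (i : Fin 3 → ℝ) (hi : gdot i i = 1) (φ : ℝ)
    (hφ0 : 0 < φ) (hφ1 : φ ≤ 2 * Real.pi / 3)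
    (hcos : gdot i (Qmap i) = Real.cos φ)
    (j : Fin 3 → ℝ)
    (hj : j = (1 / Real.sin φ) • (-(Real.cos φ) • i + Qmap i)) :
    gdot i (Qmap j) = (Real.cos φ - Real.cos φ ^ 2) / Real.sin φ ∧
    gdot j (Qmap i) = Real.sin φ ∧
    gdot j (Qmap j) = -(Real.cos φ ^ 2) / (1 + Real.cos φ) := by
  have hπ : Real.pi > 0 := Real.pi_pos
  have hφlt : φ < Real.pi := lt_of_le_of_lt hφ1 (by linarith)
  have hs : Real.sin φ > 0 := Real.sin_pos_of_pos_of_lt_pi hφ0 hφlt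
  have hs' : Real.sin φ ≠ 0 := ne_of_gt hs
  have hc : 1 + Real.cos φ > 0 := by
    rcases lt_or_ge φ (Real.pi / 2) with h | h
    · nlinarith [Real.cos_pos_of_mem_Ioo ⟨by linarith, h⟩]
    · have := Real.cos_le_cos_of_nonneg_of_le_pi (by linarith : 0 ≤ φ) (by linarith) hφ1
      have h23 : Real.cos (2 * Real.pi / 3) = -(1/2) := by
        have : (2 : ℝ) * Real.pi / 3 = Real.pi - Real.pi / 3 := by ring
        rw [this, Real.cos_pi_sub, Real.cos_pi_div_three]
      linarith
  have hc' : 1 + Real.cos φ ≠ 0 := ne_of_gt hc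
  have hsc : Real.sin φ ^ 2 + Real.cos φ ^ 2 = 1 := Real.sin_sq_add_cos_sq φ
  simp only [gdot, Qmap] at *
  subst hj
  simp only [Qmap, Pi.smul_apply, Pi.add_apply, Pi.neg_apply, smul_eq_mul,
    Matrix.cons_val_zero, Matrix.cons_val_one, Matrix.head_cons, Matrix.cons_val_two,
    Matrix.tail_cons, neg_mul] at hcos ⊢
  refine ⟨?_, ?_, ?_⟩
  · field_simp
    nlinarith [hcos, hsc]
  · field_simp
    nlinarith [hi, hcos, hsc]
  · field_simp
    linear_combination (Real.cos φ ^ 2 - Real.cos φ + 1) * (1 + Real.cos φ) * hcos -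
      Real.cos φ * (1 + Real.cos φ) * hi + Real.cos φ ^ 2 * hsc
end

section
/- With i a unit vector, φ = ∠(i,Qi) ∈ (0, 2π/3], j = (1/sin φ)(-cos φ·i + Qi), and w = x·i + y·j, one has f(w,w) = 2[(cos φ)x² + ((1-cos φ)(1+2cos φ)/sin φ)·xy - (cos²φ/(1+cos φ))·y²], where f(r,s) = ⟨r,Qs⟩ + ⟨Qr,s⟩. -/
open scoped RealInnerProductSpace

section
variable {V : Type*} [NormedAddCommGroup V] [InnerProductSpace ℝ V]

theorem LinearIsometry.inner_apply_apply_of_cube_eq_id (Q : V →ₗᵢ[ℝ] V)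
    (hQ : ∀ v, Q (Q (Q v)) = v) (v : V) : ⟪v, Q (Q v)⟫ = ⟪v, Q v⟫ := by
  rw [← Q.inner_map_map, hQ, real_inner_comm]

theorem LinearIsometry.inner_apply_frame_of_cube_eq_id (Q : V →ₗᵢ[ℝ] V)
    (hQ : ∀ v, Q (Q (Q v)) = v) (i : V) (hi : ⟪i, i⟫ = 1) (c s : ℝ) (hc : ⟪i, Q i⟫ = c)
    (hsc : s ^ 2 + c ^ 2 = 1) (hs : s ≠ 0) (x y : ℝ) :
    ⟪x • i + y • (1 / s) • (-c • i + Q i), Q (x • i + y • (1 / s) • (-c • i + Q i))⟫ =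
      c * x ^ 2 + ((1 - c) * (1 + 2 * c) / s) * (x * y) - (c ^ 2 / (1 + c)) * y ^ 2 := by
  have hc_ne : 1 + c ≠ 0 := fun h ↦
    hs <| pow_eq_zero_iff two_ne_zero |>.mp <| by linear_combination hsc + (1 - c) * h
  have hQi_Qi : ⟪Q i, Q i⟫ = 1 := by rw [Q.inner_map_map, hi]
  have hi_QQi : ⟪i, Q (Q i)⟫ = c := by rw [Q.inner_apply_apply_of_cube_eq_id hQ, hc]
  have hQi_QQi : ⟪Q i, Q (Q i)⟫ = c := by rw [Q.inner_map_map, hc]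
  simp only [map_add, map_smul, map_neg, inner_add_left, inner_add_right, inner_smul_left,
    inner_smul_right, hc, hQi_Qi, hi_QQi, hQi_QQi, RCLike.conj_to_real]
  field_simp
  linear_combination c ^ 2 * y ^ 2 * hsc

end

noncomputable def cyclicShift : EuclideanSpace ℝ (Fin 3) →ₗᵢ[ℝ] EuclideanSpace ℝ (Fin 3) :=
  (LinearIsometryEquiv.piLpCongrLeft 2 ℝ ℝ (finRotate 3).symm).toLinearIsometry

theorem cyclicShift_toLp (v : Fin 3 → ℝ) :
    cyclicShift (WithLp.toLp 2 v) = WithLp.toLp 2 (Qmap v) := by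
  ext k
  fin_cases k <;> simp [cyclicShift, Qmap, Equiv.piCongrLeft']

theorem cyclicShift_cyclicShift_cyclicShift (v : EuclideanSpace ℝ (Fin 3)) :
    cyclicShift (cyclicShift (cyclicShift v)) = v := by
  ext k
  fin_cases k <;> simp [cyclicShift, Equiv.piCongrLeft']

theorem gdot_eq_inner (v w : Fin 3 → ℝ) : gdot v w = ⟪WithLp.toLp 2 v, WithLp.toLp 2 w⟫ := by
  simp only [gdot, PiLp.inner_apply, Fin.sum_univ_three, RCLike.inner_apply, conj_trivial]
  ring

theorem fform_self (w : Fin 3 → ℝ) : fform w w = 2 * gdot w (Qmap w) := by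
  simp only [fform, gdot, Qmap, Matrix.cons_val_zero, Matrix.cons_val_one, Matrix.cons_val_two,
    Matrix.head_cons, Matrix.tail_cons]
  ring

theorem stmt_14 (i : Fin 3 → ℝ) (hi : gdot i i = 1) (φ : ℝ)
    (hφ0 : 0 < φ) (hφ1 : φ ≤ 2 * Real.pi / 3)
    (hcos : gdot i (Qmap i) = Real.cos φ)
    (j : Fin 3 → ℝ)
    (hj : j = (1 / Real.sin φ) • (-(Real.cos φ) • i + Qmap i))
    (x y : ℝ) (w : Fin 3 → ℝ) (hw : w = x • i + y • j) :
    fform w w = 2 * (Real.cos φ * x ^ 2 +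
      ((1 - Real.cos φ) * (1 + 2 * Real.cos φ) / Real.sin φ) * (x * y) -
      (Real.cos φ ^ 2 / (1 + Real.cos φ)) * y ^ 2) := by
  have hsin : Real.sin φ ≠ 0 :=
    (Real.sin_pos_of_pos_of_lt_pi hφ0 (by linarith [Real.pi_pos])).ne'
  rw [gdot_eq_inner] at hi
  rw [gdot_eq_inner, ← cyclicShift_toLp] at hcos
  subst hw hj
  rw [fform_self, gdot_eq_inner, ← cyclicShift_toLp]
  simp only [WithLp.toLp_add, WithLp.toLp_smul, ← cyclicShift_toLp]
  rw [cyclicShift.inner_apply_frame_of_cube_eq_id cyclicShift_cyclicShift_cyclicShift _ hi _ _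
    hcos (Real.sin_sq_add_cos_sq φ) hsin]
end
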